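/- arXiv:1110.3493 — 6 statements merged into one kernel-verified Lean document; each statement's English description precedes it below -/
import Mathlib

section
/- For every integer N ≥ 2, ∑_{ν=1}^{N-1} ζ₂(2N-2ν-1, 2ν+1) = (1/4) ζ(2N). -/
/-!
Write `m = p.1 + 1 < M = m + p.2 + 1`. For fixed `(m, M)` the sum over `ν` is a finite geometric
series, equal to `1 / (m ^ (2N-3) M (M² - m²)) - m / (M ^ (2N-1) (M² - m²))`. Both terms are
dominated by `1 / (m² (M - m)²)`, so they can be summed separately: the first along `M` by partial
fractions, giving `(2 H_m - H_{2m}) / (2 m ^ (2N-1))`, the second along `m`, giving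
`(H_{M-1} + H_M - H_{2M-1}) / (2 M ^ (2N-1))`. At equal index the harmonic numbers cancel up to
`1/m - 1/(2m)`, which leaves `1 / (4 m ^ (2N))`.
-/

open scoped BigOperators

/-- Double zeta value `ζ₂(k₁,k₂) = ∑_{1 ≤ m < m+n} 1/(m^{k₁} (m+n)^{k₂})`. -/
noncomputable def zeta2 (k1 k2 : ℕ) : ℂ :=
  ∑' p : ℕ × ℕ, 1 / (((p.1 : ℂ) + 1) ^ k1 * ((p.1 : ℂ) + 1 + ((p.2 : ℂ) + 1)) ^ k2)

open Finset Filter Topology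

theorem sum_Icc_one_div_pow_mul_pow_odd {F : Type*} [Field F] {a b : F} (ha : a ≠ 0)
    (hb : b ≠ 0) (hab : b ^ 2 - a ^ 2 ≠ 0) {N : ℕ} (hN : 2 ≤ N) :
    ∑ ν ∈ Icc 1 (N - 1), 1 / (a ^ (2 * N - 2 * ν - 1) * b ^ (2 * ν + 1)) =
      1 / a ^ (2 * N - 3) * (1 / (b * (b ^ 2 - a ^ 2)))
        - 1 / b ^ (2 * N - 1) * (a / (b ^ 2 - a ^ 2)) := by
  induction N, hN using Nat.le_induction with
  | base =>
    simp only [show 2 - 1 = 1 from rfl, Icc_self, sum_singleton]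
    field_simp
    ring
  | succ N hN ih =>
    have hshift : ∀ ν ∈ Icc 1 (N - 1), 1 / (a ^ (2 * (N + 1) - 2 * ν - 1) * b ^ (2 * ν + 1)) =
        1 / a ^ 2 * (1 / (a ^ (2 * N - 2 * ν - 1) * b ^ (2 * ν + 1))) := fun ν hν => by
      rw [mem_Icc] at hν
      rw [show 2 * (N + 1) - 2 * ν - 1 = 2 * N - 2 * ν - 1 + 2 by omega, pow_add]
      field_simp
    rw [show N + 1 - 1 = N - 1 + 1 by omega, sum_Icc_succ_top (by omega), sum_congr rfl hshift,
      ← mul_sum, ih, show N - 1 + 1 = N by omega, show 2 * (N + 1) - 2 * N - 1 = 1 by omega,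
      show 2 * (N + 1) - 3 = 2 * N - 3 + 2 by omega, show 2 * (N + 1) - 1 = 2 * N - 1 + 2 by omega,
      show 2 * N + 1 = 2 * N - 1 + 2 by omega]
    field_simp
    ring

theorem hasSum_sub_add_of_antitone {f : ℕ → ℝ} (hf : Antitone f)
    (hf0 : Tendsto f atTop (𝓝 0)) (m : ℕ) :
    HasSum (fun n => f n - f (n + m)) (∑ i ∈ range m, f i) := by
  have hpartial : ∀ X, ∑ n ∈ range X, (f n - f (n + m)) =
      ∑ i ∈ range m, (f i - f (X + i)) := fun X => by
    have h := sum_range_add f X m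
    rw [add_comm X m, sum_range_add f m X] at h
    simp only [sum_sub_distrib, add_comm _ m]
    linarith
  rw [hasSum_iff_tendsto_nat_of_nonneg (fun n => sub_nonneg.2 (hf (Nat.le_add_right n m)))]
  simp_rw [hpartial]
  simpa using tendsto_finsetSum (range m) fun i _ =>
    tendsto_const_nhds.sub (hf0.comp (tendsto_add_atTop_nat i))

theorem harmonic_cast_eq_sum_range (n : ℕ) :
    (harmonic n : ℝ) = ∑ i ∈ range n, 1 / ((i : ℝ) + 1) := by
  simp [harmonic]

theorem hasSum_one_div_add_one_sub_one_div_add (m : ℕ) :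
    HasSum (fun n : ℕ => 1 / ((n : ℝ) + 1) - 1 / ((n : ℝ) + 1 + m)) (harmonic m) := by
  rw [harmonic_cast_eq_sum_range]
  refine (hasSum_sub_add_of_antitone (f := fun n : ℕ => 1 / ((n : ℝ) + 1))
    (fun i j hij => one_div_le_one_div_of_le (by positivity) (by gcongr))
    tendsto_one_div_add_atTop_nhds_zero_nat m).congr_fun fun n => ?_
  push_cast
  ring_nf

theorem hasSum_one_div_mul_sq_sub_sq (m : ℕ) (hm : 0 < m) :
    HasSum (fun n : ℕ => 1 / (((m : ℝ) + (n + 1)) * (((m : ℝ) + (n + 1)) ^ 2 - (m : ℝ) ^ 2)))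
      ((2 * (harmonic m : ℝ) - harmonic (2 * m)) / (2 * m ^ 2)) := by
  have hm' : (0 : ℝ) < m := by exact_mod_cast hm
  -- `1 / (k (k + m) (k + 2m)) = (2 (1/k - 1/(k+m)) - (1/k - 1/(k+2m))) / (2 m²)`
  refine (((hasSum_one_div_add_one_sub_one_div_add m).mul_left 2).sub
    (hasSum_one_div_add_one_sub_one_div_add (2 * m)) |>.div_const (2 * (m : ℝ) ^ 2)).congr_fun
    fun n => ?_
  rw [show ((m : ℝ) + (n + 1)) ^ 2 - (m : ℝ) ^ 2 = (n + 1) * (n + 1 + 2 * m) by ring]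
  push_cast
  field_simp
  ring

theorem sum_range_div_sq_sub_sq (n : ℕ) :
    ∑ j ∈ range n, ((j : ℝ) + 1) / (((n : ℝ) + 1) ^ 2 - ((j : ℝ) + 1) ^ 2) =
      (harmonic n + harmonic (n + 1) - harmonic (2 * n + 1) : ℝ) / 2 := by
  have hpartial : ∀ j ∈ range n, ((j : ℝ) + 1) / (((n : ℝ) + 1) ^ 2 - ((j : ℝ) + 1) ^ 2) =
      (1 / (((n - 1 - j : ℕ) : ℝ) + 1) - 1 / (((n + 1 + j : ℕ) : ℝ) + 1)) / 2 := fun j hj => by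
    have hjn : j + 1 ≤ n := mem_range.1 hj
    have hjn' : (j : ℝ) + 1 ≤ n := by exact_mod_cast hjn
    have h1 : (n : ℝ) - j ≠ 0 := by linarith
    have h2 : (n : ℝ) + j + 2 ≠ 0 := by positivity
    rw [show ((n - 1 - j : ℕ) : ℝ) + 1 = n - j by
        rw [show n - 1 - j = n - (j + 1) by omega, Nat.cast_sub hjn]; push_cast; ring,
      show ((n + 1 + j : ℕ) : ℝ) + 1 = n + j + 2 by push_cast; ring,
      show ((n : ℝ) + 1) ^ 2 - ((j : ℝ) + 1) ^ 2 = (n - j) * (n + j + 2) by ring]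
    field_simp
    ring
  rw [sum_congr rfl hpartial, ← sum_div, sum_sub_distrib,
    sum_range_reflect (fun i => 1 / ((i : ℝ) + 1)) n,
    show 2 * n + 1 = (n + 1) + n by ring]
  simp only [harmonic_cast_eq_sum_range, sum_range_add]
  ring

theorem HasSum.sum_antidiagonal {α : Type*} [AddCommMonoid α] [TopologicalSpace α]
    [ContinuousAdd α] [RegularSpace α] {f : ℕ × ℕ → α} {a : α} (hf : HasSum f a) :
    HasSum (fun n => ∑ p ∈ antidiagonal n, f p) a :=
  (HasAntidiagonal.sigmaAntidiagonalEquivProd.hasSum_iff.2 hf).sigma fun n =>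
    sum_coe_sort (antidiagonal n) f ▸ hasSum_fintype _

theorem summable_one_div_add_one_sq_mul :
    Summable fun p : ℕ × ℕ => 1 / ((p.1 : ℝ) + 1) ^ 2 * (1 / ((p.2 : ℝ) + 1) ^ 2) := by
  have h : Summable fun n : ℕ => 1 / ((n : ℝ) + 1) ^ 2 := by
    simpa using (summable_nat_add_iff 1).2 (Real.summable_one_div_nat_pow.2 one_lt_two)
  exact h.mul_of_nonneg h (fun _ => by positivity) (fun _ => by positivity)

theorem one_div_pow_mul_one_div_mul_sq_sub_sq_le {K : ℕ} (hK : K ≠ 0) {m k : ℝ} (hm : 1 ≤ m)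
    (hk : 1 ≤ k) :
    1 / m ^ K * (1 / ((m + k) * ((m + k) ^ 2 - m ^ 2))) ≤ 1 / m ^ 2 * (1 / k ^ 2) := by
  have hmK : m ≤ m ^ K := le_self_pow₀ hm hK
  have hgap : m * k ≤ (m + k) ^ 2 - m ^ 2 := by nlinarith
  simp only [div_mul_div_comm, one_mul]
  apply one_div_le_one_div_of_le (by positivity)
  calc m ^ 2 * k ^ 2 = m * k * (m * k) := by ring
    _ ≤ m ^ K * (m + k) * ((m + k) ^ 2 - m ^ 2) := by gcongr; linarith
    _ = _ := mul_assoc _ _ _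

section Split

variable (K : ℕ)

noncomputable def rowTerm (p : ℕ × ℕ) : ℝ :=
  1 / ((p.1 : ℝ) + 1) ^ K * (1 / (((p.1 : ℝ) + 1 + ((p.2 : ℝ) + 1)) *
    (((p.1 : ℝ) + 1 + ((p.2 : ℝ) + 1)) ^ 2 - ((p.1 : ℝ) + 1) ^ 2)))

noncomputable def diagTerm (p : ℕ × ℕ) : ℝ :=
  1 / ((p.1 : ℝ) + 1 + ((p.2 : ℝ) + 1)) ^ K *
    (((p.1 : ℝ) + 1) / (((p.1 : ℝ) + 1 + ((p.2 : ℝ) + 1)) ^ 2 - ((p.1 : ℝ) + 1) ^ 2))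

theorem sq_sub_sq_pos (p : ℕ × ℕ) :
    0 < ((p.1 : ℝ) + 1 + ((p.2 : ℝ) + 1)) ^ 2 - ((p.1 : ℝ) + 1) ^ 2 := by
  have := p.2.cast_nonneg (α := ℝ)
  nlinarith [p.1.cast_nonneg (α := ℝ)]

theorem diagTerm_nonneg (p : ℕ × ℕ) : 0 ≤ diagTerm K p :=
  mul_nonneg (by positivity) (div_nonneg (by positivity) (sq_sub_sq_pos p).le)

theorem summable_rowTerm (hK : K ≠ 0) : Summable (rowTerm K) :=
  summable_one_div_add_one_sq_mul.of_nonneg_of_le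
    (fun p => mul_nonneg (by positivity)
      (one_div_nonneg.2 (mul_nonneg (by positivity) (sq_sub_sq_pos p).le)))
    fun _ => one_div_pow_mul_one_div_mul_sq_sub_sq_le hK (by simp) (by simp)

theorem hasSum_rowTerm_row (i : ℕ) :
    HasSum (fun j => rowTerm K (i, j)) (1 / ((i : ℝ) + 1) ^ K *
      ((2 * (harmonic (i + 1) : ℝ) - harmonic (2 * (i + 1))) / (2 * ((i : ℝ) + 1) ^ 2))) := by
  simpa [rowTerm] using
    (hasSum_one_div_mul_sq_sub_sq (i + 1) i.succ_pos).mul_left (1 / ((i : ℝ) + 1) ^ K)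

theorem sum_antidiagonal_diagTerm (s : ℕ) :
    ∑ p ∈ antidiagonal s, diagTerm K p = 1 / (((s + 1 : ℕ) : ℝ) + 1) ^ K *
      ((harmonic (s + 1) + harmonic (s + 1 + 1) - harmonic (2 * (s + 1) + 1) : ℝ) / 2) := by
  have hdiag : ∀ p ∈ antidiagonal s, (p.1 : ℝ) + 1 + ((p.2 : ℝ) + 1) = ((s + 1 : ℕ) : ℝ) + 1 :=
    fun p hp => by rw [← mem_antidiagonal.1 hp]; push_cast; ring
  calc _ = ∑ p ∈ antidiagonal s, 1 / (((s + 1 : ℕ) : ℝ) + 1) ^ K *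
        (((p.1 : ℝ) + 1) / ((((s + 1 : ℕ) : ℝ) + 1) ^ 2 - ((p.1 : ℝ) + 1) ^ 2)) :=
        sum_congr rfl fun p hp => by rw [diagTerm, hdiag p hp]
    _ = _ := by
      rw [← mul_sum, Nat.sum_antidiagonal_eq_sum_range_succ_mk, ← sum_range_div_sq_sub_sq]

/-- The antidiagonal `s` is the fiber `M = s + 2`; the shift of index is absorbed by the vanishing
term at `i = 0`, which stands for the empty fiber `M = 1`. -/
theorem HasSum.diagTerm_fibers {a : ℝ} (h : HasSum (diagTerm K) a) :
    HasSum (fun i : ℕ => 1 / ((i : ℝ) + 1) ^ K *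
      ((harmonic i + harmonic (i + 1) - harmonic (2 * i + 1) : ℝ) / 2)) a := by
  refine (hasSum_nat_add_iff' 1).1 ?_
  simpa using h.sum_antidiagonal.congr_fun fun s => (sum_antidiagonal_diagTerm K s).symm

end Split

theorem rowTerm_fiber_sub_diagTerm_fiber {N : ℕ} (hN : 2 ≤ N) (i : ℕ) :
    1 / ((i : ℝ) + 1) ^ (2 * N - 3) *
        ((2 * (harmonic (i + 1) : ℝ) - harmonic (2 * (i + 1))) / (2 * ((i : ℝ) + 1) ^ 2))
      - 1 / ((i : ℝ) + 1) ^ (2 * N - 1) *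
        ((harmonic i + harmonic (i + 1) - harmonic (2 * i + 1) : ℝ) / 2)
      = 1 / 4 * (1 / ((i : ℝ) + 1) ^ (2 * N)) := by
  rw [show 2 * (i + 1) = 2 * i + 1 + 1 by ring, harmonic_succ (2 * i + 1), harmonic_succ i,
    show 2 * N - 1 = 2 * N - 3 + 2 by omega, show 2 * N = 2 * N - 3 + 3 by omega]
  push_cast
  field_simp
  ring

theorem sum_Icc_tsum_one_div_pow_mul_pow_odd {N : ℕ} (hN : 2 ≤ N) :
    ∑ ν ∈ Icc 1 (N - 1), ∑' p : ℕ × ℕ,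
        1 / (((p.1 : ℝ) + 1) ^ (2 * N - 2 * ν - 1) *
          ((p.1 : ℝ) + 1 + ((p.2 : ℝ) + 1)) ^ (2 * ν + 1))
      = 1 / 4 * ∑' n : ℕ, 1 / ((n : ℝ) + 1) ^ (2 * N) := by
  have hsplit : ∀ p : ℕ × ℕ, ∑ ν ∈ Icc 1 (N - 1),
      1 / (((p.1 : ℝ) + 1) ^ (2 * N - 2 * ν - 1) *
        ((p.1 : ℝ) + 1 + ((p.2 : ℝ) + 1)) ^ (2 * ν + 1))
        = rowTerm (2 * N - 3) p - diagTerm (2 * N - 1) p :=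
    fun p => sum_Icc_one_div_pow_mul_pow_odd (by positivity) (by positivity)
      (sq_sub_sq_pos p).ne' hN
  have hrow := summable_rowTerm (2 * N - 3) (by omega)
  have hdiag_le : ∀ p, diagTerm (2 * N - 1) p ≤ rowTerm (2 * N - 3) p := fun p =>
    sub_nonneg.1 (hsplit p ▸ sum_nonneg fun ν _ => by positivity)
  have hdiag := hrow.of_nonneg_of_le (diagTerm_nonneg _) hdiag_le
  have hterm : ∀ ν ∈ Icc 1 (N - 1), Summable fun p : ℕ × ℕ =>
      1 / (((p.1 : ℝ) + 1) ^ (2 * N - 2 * ν - 1) *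
        ((p.1 : ℝ) + 1 + ((p.2 : ℝ) + 1)) ^ (2 * ν + 1)) :=
    fun ν hν => hrow.of_nonneg_of_le (fun p => by positivity) fun p =>
      (single_le_sum (fun _ _ => by positivity) hν).trans
        ((hsplit p).le.trans (sub_le_self _ (diagTerm_nonneg _ p)))
  calc _ = ∑' p, (rowTerm (2 * N - 3) p - diagTerm (2 * N - 1) p) := by
        rw [← Summable.tsum_finsetSum hterm]; exact tsum_congr hsplit
    _ = _ := by
      rw [hrow.tsum_sub hdiag, ← tsum_mul_left, ← ((hrow.hasSum.prod_fiberwise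
        (hasSum_rowTerm_row _)).sub hdiag.hasSum.diagTerm_fibers).tsum_eq]
      exact tsum_congr (rowTerm_fiber_sub_diagTerm_fiber hN)

theorem zeta2_eq_ofReal (k1 k2 : ℕ) :
    zeta2 k1 k2 = ((∑' p : ℕ × ℕ,
      1 / (((p.1 : ℝ) + 1) ^ k1 * ((p.1 : ℝ) + 1 + ((p.2 : ℝ) + 1)) ^ k2) : ℝ) : ℂ) := by
  rw [zeta2, Complex.ofReal_tsum]
  push_cast
  rfl

theorem riemannZeta_natCast_eq_ofReal_tsum {k : ℕ} (hk : 1 < k) :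
    riemannZeta k = ((∑' n : ℕ, 1 / ((n : ℝ) + 1) ^ k : ℝ) : ℂ) := by
  rw [zeta_eq_tsum_one_div_nat_add_one_cpow (by simpa using hk), Complex.ofReal_tsum]
  push_cast
  simp_rw [Complex.cpow_natCast]

theorem GKZ_odd_sum_formula (N : ℕ) (hN : 2 ≤ N) :
    ∑ ν ∈ Finset.Icc 1 (N - 1), zeta2 (2 * N - 2 * ν - 1) (2 * ν + 1)
      = (1 / 4 : ℂ) * riemannZeta (2 * N) := by
  rw [show (2 * N : ℂ) = (2 * N : ℕ) by push_cast; ring,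
    riemannZeta_natCast_eq_ofReal_tsum (by omega)]
  simp_rw [zeta2_eq_ofReal]
  rw [← Complex.ofReal_sum, sum_Icc_tsum_one_div_pow_mul_pow_odd hN]
  push_cast
  rfl
end

section
/- For every integer l ≥ 3, the weighted sum ∑_{ν=2}^{l-1} 2^ν ζ₂(l-ν, ν) equals (l+1) ζ(l). -/
open scoped BigOperators

/-!
With `a = m + 1` and `b = m + n + 2`, the weighted sum of the terms `1 / (a ^ (l - ν) * b ^ ν)` is a
geometric progression in `2a / b`. Off the diagonal `b = 2a` it sums to
`4 / (b (n - m)) * (1 / a ^ (l - 2) - (2 / b) ^ (l - 2))`, and on the diagonal to `(l - 2) / a ^ l`.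
The part with `(2 / b) ^ (l - 2)` is antisymmetric in `(m, n)`, so its sum over `ℕ × ℕ` vanishes.
For fixed `m` the sum over `n` of `1 / (b (n - m))` telescopes to `3 / (4 a ^ 2)`, so the part
with `1 / a ^ (l - 2)` contributes `3 ζ(l)`, and the diagonal contributes `(l - 2) ζ(l)`.
Each of these rearrangements is justified by absolute convergence, which follows from
`1 / (a b |n - m|) ≤ (a |n - m|) ^ (-3/2)`.
-/

section

open Finset Filter Topology

theorem hasSum_sub_nat_add {G : Type*} [AddCommGroup G] [TopologicalSpace G]
    [IsTopologicalAddGroup G] [T2Space G] {f : ℕ → G} (hf : Tendsto f atTop (𝓝 0)) (c : ℕ)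
    (hs : Summable fun n ↦ f n - f (n + c)) :
    HasSum (fun n ↦ f n - f (n + c)) (∑ i ∈ range c, f i) := by
  rw [hs.hasSum_iff_tendsto_nat]
  have partial_sum (N : ℕ) : ∑ n ∈ range N, (f n - f (n + c))
      = ∑ i ∈ range c, f i - ∑ i ∈ range c, f (N + i) := by
    have h₁ := sum_range_add f N c
    have h₂ := sum_range_add f c N
    rw [add_comm c N] at h₂
    simp_rw [sum_sub_distrib, add_comm _ c]
    rw [eq_sub_iff_add_eq, sub_add_eq_add_sub, sub_eq_iff_eq_add, ← h₁, h₂, add_comm]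
  simp_rw [partial_sum]
  have hvanish : Tendsto (fun N ↦ ∑ i ∈ range c, f (N + i)) atTop (𝓝 0) := by
    simpa using tendsto_finsetSum (range c) fun i _ ↦ hf.comp (tendsto_add_atTop_nat i)
  simpa using tendsto_const_nhds.sub hvanish

theorem tsum_eq_zero_of_swap_eq_neg {α : Type*} {f : α × α → ℝ} (hf : ∀ p, f p.swap = -f p) :
    ∑' p, f p = 0 := by
  have h := (Equiv.prodComm α α).tsum_eq f
  simp only [Equiv.prodComm_apply, hf, tsum_neg] at h
  linarith

theorem summable_one_div_nat_add_one_pow {j : ℕ} (hj : 2 ≤ j) :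
    Summable fun m : ℕ ↦ 1 / ((m : ℝ) + 1) ^ j := by
  simpa using (summable_nat_add_iff 1).mpr (Real.summable_one_div_nat_pow.mpr hj)

theorem sum_range_one_div_natCast_sub (m : ℕ) :
    ∑ i ∈ range (2 * m + 2), 1 / ((i : ℝ) - m) = 1 / (m + 1) := by
  have hsymm : ∑ i ∈ range (2 * m + 1), 1 / ((i : ℝ) - m) = 0 := by
    have hreflect : ∑ i ∈ range (2 * m + 1), 1 / ((i : ℝ) - m)
        = -∑ i ∈ range (2 * m + 1), 1 / ((i : ℝ) - m) := by
      conv_lhs => rw [← sum_range_reflect]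
      rw [← sum_neg_distrib]
      refine sum_congr rfl fun i hi ↦ ?_
      rw [mem_range] at hi
      rw [Nat.cast_sub (by omega), ← one_div_neg_eq_neg_one_div]
      push_cast
      ring_nf
    linarith
  rw [sum_range_succ, hsymm]
  push_cast
  ring_nf

theorem one_div_mul_mul_le_rpow {x y z : ℝ} (hx : 0 < x) (hy : 0 < y) (hxz : x ≤ z)
    (hyz : y ≤ z) :
    1 / (x * y * z) ≤ 1 / x ^ (3 / 2 : ℝ) * (1 / y ^ (3 / 2 : ℝ)) := by
  have hxy : 0 < x * y := mul_pos hx hy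
  have hsqrt : √(x * y) ≤ z :=
    Real.sqrt_le_iff.mpr ⟨hx.le.trans hxz, by nlinarith⟩
  have hrpow : (x * y) ^ (3 / 2 : ℝ) = x * y * √(x * y) := by
    rw [show (3 / 2 : ℝ) = 1 + 1 / 2 by norm_num, Real.rpow_add hxy, Real.rpow_one,
      Real.sqrt_eq_rpow]
  rw [one_div_mul_one_div, ← Real.mul_rpow hx.le hy.le, hrpow]
  gcongr

theorem sum_Icc_pow_mul_pow {R : Type*} [CommRing R] (x y : R) (k : ℕ) :
    ∑ ν ∈ Icc 2 (k + 1), y ^ (k + 2 - ν) * x ^ ν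
      = y * x ^ 2 * ∑ i ∈ range k, x ^ i * y ^ (k - 1 - i) := by
  rw [← Ico_add_one_right_eq_Icc, sum_Ico_eq_sum_range, mul_sum]
  refine sum_congr (by simp) fun i hi ↦ ?_
  rw [mem_range] at hi
  rw [show k + 2 - (2 + i) = k - 1 - i + 1 by omega]
  ring

end

namespace OhnoZudilin

open Finset Filter Topology

-- `1 / 0 = 0` makes the kernel vanish on the diagonal `n = m`.
noncomputable def kernel (m n : ℕ) : ℝ := 1 / ((m + n + 2 : ℝ) * (n - m))

lemma kernel_self (m : ℕ) : kernel m m = 0 := by simp [kernel]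

lemma kernel_swap (m n : ℕ) : kernel n m = -kernel m n := by
  rw [kernel, kernel, ← one_div_neg_eq_neg_one_div]
  ring_nf

lemma abs_kernel_div_le (m n : ℕ) :
    |kernel m n| / (m + 1)
      ≤ 1 / |(m : ℝ) + 1| ^ (3 / 2 : ℝ) * (1 / |(n : ℝ) - m| ^ (3 / 2 : ℝ)) := by
  rcases eq_or_ne n m with rfl | hnm
  · simp [kernel_self]
  have hd : 0 < |(n : ℝ) - m| := abs_pos.mpr (sub_ne_zero.mpr (by exact_mod_cast hnm))
  have hm : (0 : ℝ) < m + 1 := by positivity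
  have hbound := one_div_mul_mul_le_rpow (z := m + n + 2) hm hd
    (by linarith [(n.cast_nonneg : (0 : ℝ) ≤ n)])
    (abs_le.mpr ⟨by linarith [(n.cast_nonneg : (0 : ℝ) ≤ n)],
      by linarith [(m.cast_nonneg : (0 : ℝ) ≤ m)]⟩)
  rw [abs_of_pos hm]
  convert hbound using 1
  rw [kernel, abs_div, abs_one, abs_mul, abs_of_pos (by positivity : (0 : ℝ) < m + n + 2)]
  field_simp

lemma summable_abs_kernel_div :
    Summable fun p : ℕ × ℕ ↦ |kernel p.1 p.2| / (p.1 + 1) := by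
  have hm := (Real.summable_one_div_nat_add_rpow 1 (3 / 2)).mpr (by norm_num)
  have hd := (Real.summable_one_div_int_add_rpow 0 (3 / 2)).mpr (by norm_num)
  simp only [add_zero] at hd
  have hinj : Function.Injective fun p : ℕ × ℕ ↦ (p.1, (p.2 : ℤ) - p.1) := by
    rintro ⟨m, n⟩ ⟨m', n'⟩ h
    simp only [Prod.mk.injEq] at h
    obtain ⟨rfl, h⟩ := h
    simp_all
  refine ((hm.mul_of_nonneg hd (fun _ ↦ by positivity) (fun _ ↦ by positivity)).comp_injective
    hinj).of_nonneg_of_le (fun _ ↦ by positivity) fun p ↦ ?_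
  simpa using abs_kernel_div_le p.1 p.2

lemma summable_of_abs_le_kernel {f : ℕ × ℕ → ℝ} (C : ℝ)
    (hf : ∀ m n, |f (m, n)| ≤ C * (|kernel m n| / (m + 1))) : Summable f :=
  (summable_abs_kernel_div.mul_left C).of_norm_bounded fun p ↦ hf p.1 p.2

-- Partial fractions; the indicator compensates for `1 / (n - m)` being `0` at `n = m`.
lemma kernel_eq_sub_add_ite (m n : ℕ) :
    kernel m n = (1 / ((n : ℝ) - m) - 1 / (((n + (2 * m + 2) : ℕ) : ℝ) - m)
      + if n = m then (1 / (2 * m + 2) : ℝ) else 0) / (2 * m + 2) := by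
  have hshift : ((n + (2 * m + 2) : ℕ) : ℝ) - m = m + n + 2 := by push_cast; ring
  rw [hshift, kernel]
  rcases eq_or_ne n m with rfl | hnm
  · simp only [sub_self, mul_zero, div_zero, if_true]
    ring
  · have hd : (n : ℝ) - m ≠ 0 := sub_ne_zero.mpr (by exact_mod_cast hnm)
    have hb : (m + n + 2 : ℝ) ≠ 0 := by positivity
    rw [if_neg hnm]
    field_simp
    ring

lemma hasSum_kernel (m : ℕ) : HasSum (kernel m) (3 / (4 * (m + 1) ^ 2)) := by
  have hsummable : Summable (kernel m) :=
    Summable.of_abs <| ((summable_abs_kernel_div.prod_factor m).mul_left ((m : ℝ) + 1)).congr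
      fun n ↦ mul_div_cancel₀ _ (by positivity)
  have hvanish : Tendsto (fun n : ℕ ↦ 1 / ((n : ℝ) - m)) atTop (𝓝 0) := by
    simp_rw [sub_eq_add_neg]
    exact tendsto_const_nhds.div_atTop
      (tendsto_atTop_add_const_right _ _ tendsto_natCast_atTop_atTop)
  have hdiagonal := hasSum_ite_eq m (1 / (2 * m + 2) : ℝ)
  have htelescope := hasSum_sub_nat_add hvanish (2 * m + 2) <|
    ((hsummable.mul_right (2 * m + 2 : ℝ)).sub hdiagonal.summable).congr fun n ↦ by
      rw [kernel_eq_sub_add_ite, div_mul_cancel₀ _ (by positivity)]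
      ring
  rw [sum_range_one_div_natCast_sub] at htelescope
  have hsum := (htelescope.add hdiagonal).div_const (2 * m + 2)
  have hvalue :
      (1 / ((m : ℝ) + 1) + 1 / (2 * m + 2)) / (2 * m + 2) = 3 / (4 * (m + 1) ^ 2) := by
    field_simp
    ring
  rwa [← funext (kernel_eq_sub_add_ite m), hvalue] at hsum

noncomputable def doubleZetaTerm (k₁ k₂ m n : ℕ) : ℝ :=
  1 / ((m + 1 : ℝ) ^ k₁ * (m + n + 2) ^ k₂)

noncomputable def weightedTerm (k m n : ℕ) : ℝ :=
  ∑ ν ∈ Icc 2 (k + 1), 2 ^ ν * doubleZetaTerm (k + 2 - ν) ν m n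

lemma weightedTerm_eq (k m n : ℕ) :
    weightedTerm k m n = (if n = m then k / (m + 1 : ℝ) ^ (k + 2) else 0)
      + 4 * kernel m n / (m + 1) ^ k - 4 * kernel m n * (2 / (m + n + 2)) ^ k := by
  set y : ℝ := 1 / (m + 1)
  set x : ℝ := 2 / (m + n + 2)
  have ha : (m + 1 : ℝ) ≠ 0 := by positivity
  have hb : (m + n + 2 : ℝ) ≠ 0 := by positivity
  have hterm (ν : ℕ) : 2 ^ ν * doubleZetaTerm (k + 2 - ν) ν m n = y ^ (k + 2 - ν) * x ^ ν := by
    simp only [doubleZetaTerm, y, x, div_pow, one_pow]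
    field_simp
  have hyk (j : ℕ) : 1 / (m + 1 : ℝ) ^ j = y ^ j := (one_div_pow _ _).symm
  rw [weightedTerm, sum_congr rfl fun ν _ ↦ hterm ν, sum_Icc_pow_mul_pow,
    div_eq_mul_one_div (4 * kernel m n), hyk]
  rcases eq_or_ne n m with rfl | hnm
  · have hxy : x = y := by simp only [x, y]; field_simp; ring
    rw [hxy, geom_sum₂_self, if_pos rfl, kernel, sub_self, mul_zero, div_zero,
      div_eq_mul_one_div (k : ℝ), hyk]
    rcases k with _ | k
    · simp
    · push_cast
      ring
  · have hd : (n : ℝ) - m ≠ 0 := sub_ne_zero.mpr (by exact_mod_cast hnm)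
    have hfactor : y * x ^ 2 = 4 * kernel m n * (y - x) := by
      simp only [kernel, x, y]
      field_simp
      ring
    rw [if_neg hnm, hfactor]
    linear_combination (-4 * kernel m n) * geom_sum₂_mul x y k

lemma hasSum_diagonal (k : ℕ) :
    HasSum (fun p : ℕ × ℕ ↦ if p.2 = p.1 then k / (p.1 + 1 : ℝ) ^ (k + 2) else 0)
      (k * ∑' m : ℕ, 1 / ((m : ℝ) + 1) ^ (k + 2)) := by
  have hinj : Function.Injective fun m : ℕ ↦ (m, m) := fun _ _ h ↦ (Prod.ext_iff.mp h).1
  rw [← hinj.hasSum_iff fun p hp ↦ if_neg fun h ↦ hp ⟨p.1, Prod.ext rfl h.symm⟩]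
  simpa [Function.comp_def, div_eq_mul_one_div (k : ℝ)] using
    ((summable_one_div_nat_add_one_pow (by omega : 2 ≤ k + 2)).hasSum.mul_left (k : ℝ))

lemma hasSum_kernel_div_pow {k : ℕ} (hk : 1 ≤ k) :
    HasSum (fun p : ℕ × ℕ ↦ 4 * kernel p.1 p.2 / (p.1 + 1) ^ k)
      (3 * ∑' m : ℕ, 1 / ((m : ℝ) + 1) ^ (k + 2)) := by
  have hsummable : Summable fun p : ℕ × ℕ ↦ 4 * kernel p.1 p.2 / (p.1 + 1) ^ k := by
    refine summable_of_abs_le_kernel 4 fun m n ↦ ?_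
    have ha : (1 : ℝ) ≤ m + 1 := by linarith [(m.cast_nonneg : (0 : ℝ) ≤ m)]
    rw [abs_div, abs_mul, abs_of_pos (by positivity : (0 : ℝ) < (m + 1) ^ k),
      abs_of_pos four_pos, mul_div_assoc]
    gcongr
    exact le_self_pow₀ ha (by omega)
  have hrows (m : ℕ) : HasSum (fun n ↦ 4 * kernel m n / (m + 1) ^ k)
      (3 * (1 / ((m : ℝ) + 1) ^ (k + 2))) := by
    have hvalue : 4 * (3 / (4 * ((m : ℝ) + 1) ^ 2)) / ((m : ℝ) + 1) ^ k
        = 3 * (1 / ((m : ℝ) + 1) ^ (k + 2)) := by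
      field_simp
      ring
    simpa only [hvalue] using ((hasSum_kernel m).mul_left 4).div_const (((m : ℝ) + 1) ^ k)
  have hzeta := ((summable_one_div_nat_add_one_pow (by omega : 2 ≤ k + 2)).hasSum.mul_left 3)
  have hsum := hsummable.hasSum
  rwa [(hsum.prod_fiberwise hrows).unique hzeta] at hsum

lemma summable_kernel_mul_pow {k : ℕ} (hk : 1 ≤ k) :
    Summable fun p : ℕ × ℕ ↦ 4 * kernel p.1 p.2 * (2 / (p.1 + p.2 + 2 : ℝ)) ^ k := by
  refine summable_of_abs_le_kernel 8 fun m n ↦ ?_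
  have hm : (0 : ℝ) ≤ m := m.cast_nonneg
  have hn : (0 : ℝ) ≤ n := n.cast_nonneg
  have hx_nonneg : 0 ≤ 2 / (m + n + 2 : ℝ) := by positivity
  have hx_le_one : 2 / (m + n + 2 : ℝ) ≤ 1 := by
    rw [div_le_one (by positivity)]
    linarith
  have hx_le : 2 / (m + n + 2 : ℝ) ≤ 2 / (m + 1) :=
    div_le_div_of_nonneg_left zero_le_two (by positivity) (by linarith)
  dsimp only
  rw [abs_mul, abs_mul, abs_of_pos four_pos, abs_of_nonneg (pow_nonneg hx_nonneg k)]
  calc 4 * |kernel m n| * (2 / (m + n + 2 : ℝ)) ^ k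
      ≤ 4 * |kernel m n| * (2 / (m + 1)) := by
        gcongr
        exact (pow_le_of_le_one hx_nonneg hx_le_one (by omega)).trans hx_le
    _ = 8 * (|kernel m n| / (m + 1)) := by ring

lemma hasSum_weightedTerm {k : ℕ} (hk : 1 ≤ k) :
    HasSum (fun p : ℕ × ℕ ↦ weightedTerm k p.1 p.2)
      ((k + 3) * ∑' m : ℕ, 1 / ((m : ℝ) + 1) ^ (k + 2)) := by
  set ζ := ∑' m : ℕ, 1 / ((m : ℝ) + 1) ^ (k + 2)
  have hantisymm := (summable_kernel_mul_pow hk).hasSum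
  rw [tsum_eq_zero_of_swap_eq_neg fun ⟨m, n⟩ ↦ by
    dsimp only [Prod.swap]
    rw [kernel_swap, add_comm (n : ℝ)]
    ring] at hantisymm
  have hsum := ((hasSum_diagonal k).add (hasSum_kernel_div_pow hk)).sub hantisymm
  rw [show (k : ℝ) * ζ + 3 * ζ - 0 = (k + 3) * ζ by ring] at hsum
  exact hsum.congr_fun fun p ↦ weightedTerm_eq k p.1 p.2

lemma doubleZetaTerm_nonneg (k₁ k₂ m n : ℕ) : 0 ≤ doubleZetaTerm k₁ k₂ m n := by
  unfold doubleZetaTerm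
  positivity

lemma summable_doubleZetaTerm {k ν : ℕ} (hk : 1 ≤ k) (hν : ν ∈ Icc 2 (k + 1)) :
    Summable fun p : ℕ × ℕ ↦ doubleZetaTerm (k + 2 - ν) ν p.1 p.2 := by
  refine (hasSum_weightedTerm hk).summable.of_nonneg_of_le (fun _ ↦ doubleZetaTerm_nonneg ..)
    fun p ↦ ?_
  calc doubleZetaTerm (k + 2 - ν) ν p.1 p.2
      ≤ 2 ^ ν * doubleZetaTerm (k + 2 - ν) ν p.1 p.2 :=
        le_mul_of_one_le_left (doubleZetaTerm_nonneg ..) (one_le_pow₀ one_le_two)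
    _ ≤ weightedTerm k p.1 p.2 :=
        single_le_sum (f := fun ν ↦ 2 ^ ν * doubleZetaTerm (k + 2 - ν) ν p.1 p.2)
          (fun _ _ ↦ mul_nonneg (by positivity) (doubleZetaTerm_nonneg ..)) hν

lemma sum_two_pow_mul_tsum_doubleZetaTerm {k : ℕ} (hk : 1 ≤ k) :
    ∑ ν ∈ Icc 2 (k + 1), 2 ^ ν * ∑' p : ℕ × ℕ, doubleZetaTerm (k + 2 - ν) ν p.1 p.2
      = (k + 3) * ∑' m : ℕ, 1 / ((m : ℝ) + 1) ^ (k + 2) := by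
  rw [← (hasSum_weightedTerm hk).tsum_eq]
  simp only [weightedTerm]
  rw [Summable.tsum_finsetSum fun ν hν ↦ (summable_doubleZetaTerm hk hν).mul_left _]
  simp_rw [tsum_mul_left]

lemma zeta2_eq_ofReal_tsum (k₁ k₂ : ℕ) :
    zeta2 k₁ k₂ = ((∑' p : ℕ × ℕ, doubleZetaTerm k₁ k₂ p.1 p.2 : ℝ) : ℂ) := by
  rw [zeta2, Complex.ofReal_tsum]
  congr 1 with p
  push_cast [doubleZetaTerm]
  ring

lemma riemannZeta_natCast_eq_ofReal_tsum {j : ℕ} (hj : 2 ≤ j) :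
    riemannZeta j = ((∑' m : ℕ, 1 / ((m : ℝ) + 1) ^ j : ℝ) : ℂ) := by
  rw [zeta_eq_tsum_one_div_nat_add_one_cpow (by rw [Complex.natCast_re]; exact_mod_cast hj),
    Complex.ofReal_tsum]
  congr 1 with m
  push_cast
  rw [Complex.cpow_natCast]

end OhnoZudilin

theorem Ohno_Zudilin_weighted_sum_formula (l : ℕ) (hl : 3 ≤ l) :
    ∑ ν ∈ Finset.Icc 2 (l - 1), (2 : ℂ) ^ ν * zeta2 (l - ν) ν
      = ((l : ℂ) + 1) * riemannZeta l := by
  obtain ⟨k, rfl⟩ : ∃ k, l = k + 2 := ⟨l - 2, by omega⟩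
  have hk : 1 ≤ k := by omega
  have hreal := congrArg ((↑) : ℝ → ℂ) (OhnoZudilin.sum_two_pow_mul_tsum_doubleZetaTerm hk)
  push_cast at hreal
  rw [show k + 2 - 1 = k + 1 by omega, OhnoZudilin.riemannZeta_natCast_eq_ofReal_tsum (by omega)]
  simp_rw [OhnoZudilin.zeta2_eq_ofReal_tsum]
  push_cast
  linear_combination hreal
end

section
/- For every positive integer k and every complex number x with |x| ≤ 1, the identity ∑_{m,n≥1} x^n/(m(m+n)^{k+1}) − ∑_{m,n≥1} x^{m+n}/(m(m+n)^{k+1}) + ∑_{ν=2}^{k+1} ∑_{m,n≥1} x^n/(n^{k+2−ν}(m+n)^ν) = Li(k+2; x) holds, where Li(s;x) = ∑_{n≥1} x^n/n^s. -/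
/-!
Write `m, n ≥ 1` for the summation indices. Partial fractions give, for each pair,
`1/(m(m+n)^{k+1}) + ∑_{ν=2}^{k+1} 1/(n^{k+2-ν}(m+n)^ν) = n^{-(k+1)} (1/m - 1/(m+n))`, and summing
over `m` telescopes to the harmonic number `H_n`; so the first and third sums together equal
`∑_n x^n H_n / n^{k+1}`. Grouping the second sum along the diagonals `m + n = N` gives
`∑_N x^N H_{N-1} / N^{k+1}`. Since `H_N - H_{N-1} = 1/N`, the difference is `Li(k+2; x)`.
For `k ≥ 1` every double series is dominated by `1/(mn(m+n)) ≤ (mn)^{-3/2}`.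
-/

open Filter Topology Finset

theorem Finset.sum_range_sub_shift {G : Type*} [AddCommGroup G] (u : ℕ → G) (M n : ℕ) :
    ∑ m ∈ range M, (u m - u (m + n)) = ∑ i ∈ range n, u i - ∑ i ∈ range n, u (M + i) := by
  have h := (sum_range_add u M n).symm.trans (add_comm M n ▸ sum_range_add u n M)
  rw [sum_sub_distrib, eq_sub_iff_add_eq, sub_add_eq_add_sub, sub_eq_iff_eq_add, h]
  simp only [add_comm _ n]

theorem harmonic_eq_sum_one_div {K : Type*} [DivisionRing K] [CharZero K] (n : ℕ) :
    (harmonic n : K) = ∑ i ∈ range n, 1 / ((i : K) + 1) := by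
  simp [harmonic]

theorem Real.hasSum_one_div_sub_one_div_add (n : ℕ) :
    HasSum (fun m : ℕ => 1 / ((m : ℝ) + 1) - 1 / ((m : ℝ) + 1 + n)) (harmonic n) := by
  set u : ℕ → ℝ := fun m => 1 / ((m : ℝ) + 1)
  have hu (m : ℕ) : 1 / ((m : ℝ) + 1) - 1 / ((m : ℝ) + 1 + n) = u m - u (m + n) := by
    simp only [u]; push_cast; ring_nf
  have hnonneg (m : ℕ) : 0 ≤ 1 / ((m : ℝ) + 1) - 1 / ((m : ℝ) + 1 + n) :=
    sub_nonneg.2 (one_div_le_one_div_of_le (by positivity) (by linarith [n.cast_nonneg (α := ℝ)]))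
  rw [hasSum_iff_tendsto_nat_of_nonneg hnonneg]
  simp only [hu, sum_range_sub_shift, harmonic_eq_sum_one_div]
  have hu0 : Tendsto u atTop (𝓝 0) := tendsto_one_div_add_atTop_nhds_zero_nat
  have htail : Tendsto (fun M => ∑ i ∈ range n, u (M + i)) atTop (𝓝 0) := by
    simpa using tendsto_finsetSum (range n) fun i _ => hu0.comp (tendsto_add_atTop_nat i)
  simpa [u] using (tendsto_const_nhds (x := ∑ i ∈ range n, u i)).sub htail

theorem one_div_mul_add_pow_add_sum_Icc {K : Type*} [Field K] (k : ℕ) {m n : K}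
    (hm : m ≠ 0) (hn : n ≠ 0) (hmn : m + n ≠ 0) :
    1 / (m * (m + n) ^ (k + 1)) + ∑ ν ∈ Icc 2 (k + 1), 1 / (n ^ (k + 2 - ν) * (m + n) ^ ν)
      = 1 / n ^ (k + 1) * (1 / m - 1 / (m + n)) := by
  induction k with
  | zero =>
    rw [Icc_eq_empty (by omega), sum_empty, add_zero]
    field_simp
    ring
  | succ k ih =>
    have hsplit : ∑ ν ∈ Icc 2 (k + 2), 1 / (n ^ (k + 3 - ν) * (m + n) ^ ν)
        = 1 / n * ∑ ν ∈ Icc 2 (k + 1), 1 / (n ^ (k + 2 - ν) * (m + n) ^ ν)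
          + 1 / (n * (m + n) ^ (k + 2)) := by
      rw [sum_Icc_succ_top (by omega), mul_sum, show k + 3 - (k + 1 + 1) = 1 by omega, pow_one]
      congr 1
      refine sum_congr rfl fun ν hν => ?_
      rw [show k + 3 - ν = k + 2 - ν + 1 by grind, pow_succ]
      field_simp
    rw [hsplit, show 1 / n ^ (k + 2) * (1 / m - 1 / (m + n))
      = 1 / n * (1 / n ^ (k + 1) * (1 / m - 1 / (m + n))) by rw [pow_succ']; field_simp, ← ih]
    field_simp
    ring

theorem summable_inv_mul_mul_add :
    Summable fun p : ℕ × ℕ => (((p.1 + 1) * (p.2 + 1) * (p.1 + p.2 + 2) : ℕ) : ℝ)⁻¹ := by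
  have hg : Summable fun n : ℕ => ((n + 1 : ℝ) * √(n + 1))⁻¹ := by
    have := (summable_nat_add_iff 1).2
      (Real.summable_nat_rpow_inv.2 (by norm_num : (1 : ℝ) < 3 / 2))
    refine this.congr fun n => ?_
    push_cast
    rw [Real.sqrt_eq_rpow, ← Real.rpow_one_add' (by positivity) (by norm_num)]
    norm_num
  refine (hg.mul_of_nonneg hg (fun _ => by positivity) (fun _ => by positivity)).of_nonneg_of_le
    (fun _ => by positivity) fun p => ?_
  rw [← mul_inv]
  refine inv_anti₀ (by positivity) ?_
  have hsqrt : √((p.1 + 1 : ℝ) * (p.2 + 1)) ≤ p.1 + p.2 + 2 := Real.sqrt_le_iff.2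
    ⟨by positivity, by nlinarith [p.1.cast_nonneg (α := ℝ), p.2.cast_nonneg (α := ℝ)]⟩
  rw [Real.sqrt_mul (by positivity)] at hsqrt
  push_cast
  calc ((p.1 : ℝ) + 1) * √(p.1 + 1) * (((p.2 : ℝ) + 1) * √(p.2 + 1))
      = (p.1 + 1) * (p.2 + 1) * (√(p.1 + 1) * √(p.2 + 1)) := by ring
    _ ≤ (p.1 + 1) * (p.2 + 1) * (p.1 + p.2 + 2) := by gcongr

section

variable {𝕜 : Type*} [RCLike 𝕜]

theorem hasSum_one_div_sub_one_div_add (n : ℕ) :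
    HasSum (fun m : ℕ => 1 / ((m : 𝕜) + 1) - 1 / ((m : 𝕜) + 1 + n)) (harmonic n) := by
  have h := (RCLike.hasSum_ofReal 𝕜).2 (Real.hasSum_one_div_sub_one_div_add n)
  push_cast at h
  exact h

variable {k : ℕ} {x : 𝕜}

theorem summable_pow_div_natCast (hx : ‖x‖ ≤ 1) (e D : ℕ × ℕ → ℕ)
    (hD : ∀ p, (p.1 + 1) * (p.2 + 1) * (p.1 + p.2 + 2) ≤ D p) :
    Summable fun p => x ^ e p / (D p : 𝕜) := by
  refine summable_inv_mul_mul_add.of_norm_bounded fun p => ?_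
  have hpos : (0 : ℝ) < ((p.1 + 1) * (p.2 + 1) * (p.1 + p.2 + 2) : ℕ) := by positivity
  rw [norm_div, norm_pow, RCLike.norm_natCast, ← one_div]
  exact div_le_div₀ zero_le_one (pow_le_one₀ (norm_nonneg x) hx) hpos (by exact_mod_cast hD p)

theorem summable_pow_div_mul_add_pow (hk : 1 ≤ k) (hx : ‖x‖ ≤ 1) (e : ℕ × ℕ → ℕ) :
    Summable fun p : ℕ × ℕ =>
      x ^ e p / (((p.1 : 𝕜) + 1) * ((p.1 : 𝕜) + 1 + ((p.2 : 𝕜) + 1)) ^ (k + 1)) := by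
  refine (summable_pow_div_natCast hx e (fun p => (p.1 + 1) * (p.1 + 1 + (p.2 + 1)) ^ (k + 1))
    fun p => ?_).congr fun p => by push_cast; rfl
  calc (p.1 + 1) * (p.2 + 1) * (p.1 + p.2 + 2) ≤ (p.1 + 1) * (p.1 + 1 + (p.2 + 1)) ^ 2 := by
        rw [mul_assoc, sq]
        exact Nat.mul_le_mul_left _ (Nat.mul_le_mul (by omega) (by omega))
    _ ≤ (p.1 + 1) * (p.1 + 1 + (p.2 + 1)) ^ (k + 1) :=
        Nat.mul_le_mul_left _ (Nat.pow_le_pow_right (by omega) (by omega))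

theorem summable_pow_div_pow_mul_add_pow (hx : ‖x‖ ≤ 1) {ν : ℕ} (hν : 2 ≤ ν) (hνk : ν ≤ k + 1) :
    Summable fun p : ℕ × ℕ =>
      x ^ (p.2 + 1) / (((p.2 : 𝕜) + 1) ^ (k + 2 - ν) * ((p.1 : 𝕜) + 1 + ((p.2 : 𝕜) + 1)) ^ ν) := by
  refine (summable_pow_div_natCast hx _
    (fun p => (p.2 + 1) ^ (k + 2 - ν) * (p.1 + 1 + (p.2 + 1)) ^ ν) fun p => ?_).congr
    fun p => by push_cast; rfl
  calc (p.1 + 1) * (p.2 + 1) * (p.1 + p.2 + 2) ≤ (p.2 + 1) ^ 1 * (p.1 + 1 + (p.2 + 1)) ^ 2 := by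
        rw [mul_comm (p.1 + 1), mul_assoc, sq, pow_one]
        exact Nat.mul_le_mul_left _ (Nat.mul_le_mul (by omega) (by omega))
    _ ≤ (p.2 + 1) ^ (k + 2 - ν) * (p.1 + 1 + (p.2 + 1)) ^ ν :=
        Nat.mul_le_mul (Nat.pow_le_pow_right (by omega) (by omega))
          (Nat.pow_le_pow_right (by omega) hν)

theorem hasSum_pow_div_pow_mul_harmonic_succ (hk : 1 ≤ k) (hx : ‖x‖ ≤ 1) :
    HasSum (fun n : ℕ => x ^ (n + 1) / ((n : 𝕜) + 1) ^ (k + 1) * harmonic (n + 1))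
      ((∑' p : ℕ × ℕ, x ^ (p.2 + 1) /
          (((p.1 : 𝕜) + 1) * ((p.1 : 𝕜) + 1 + ((p.2 : 𝕜) + 1)) ^ (k + 1)))
        + ∑ ν ∈ Icc 2 (k + 1), ∑' p : ℕ × ℕ, x ^ (p.2 + 1) /
          (((p.2 : 𝕜) + 1) ^ (k + 2 - ν) * ((p.1 : 𝕜) + 1 + ((p.2 : 𝕜) + 1)) ^ ν)) := by
  have hpf (p : ℕ × ℕ) :
      x ^ (p.2 + 1) / (((p.1 : 𝕜) + 1) * ((p.1 : 𝕜) + 1 + ((p.2 : 𝕜) + 1)) ^ (k + 1))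
        + ∑ ν ∈ Icc 2 (k + 1), x ^ (p.2 + 1) /
          (((p.2 : 𝕜) + 1) ^ (k + 2 - ν) * ((p.1 : 𝕜) + 1 + ((p.2 : 𝕜) + 1)) ^ ν)
      = x ^ (p.2 + 1) / ((p.2 : 𝕜) + 1) ^ (k + 1)
        * (1 / ((p.1 : 𝕜) + 1) - 1 / ((p.1 : 𝕜) + 1 + ((p.2 : 𝕜) + 1))) := by
    have h := one_div_mul_add_pow_add_sum_Icc k (Nat.cast_add_one_ne_zero (R := 𝕜) p.1)
      (Nat.cast_add_one_ne_zero p.2) (by exact_mod_cast Nat.succ_ne_zero (p.1 + 1 + p.2))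
    simp only [div_eq_mul_one_div (x ^ _), ← mul_sum, ← mul_add, h]
    ring
  have hS3 := hasSum_sum fun ν hν => (summable_pow_div_pow_mul_add_pow (k := k) hx
    (mem_Icc.1 hν).1 (mem_Icc.1 hν).2).hasSum
  have hsum := ((summable_pow_div_mul_add_pow hk hx (fun p => p.2 + 1)).hasSum.add hS3).congr_fun
    fun p => (hpf p).symm
  refine ((Equiv.prodComm ℕ ℕ).hasSum_iff.2 hsum).prod_fiberwise fun n => ?_
  simpa using (hasSum_one_div_sub_one_div_add (n + 1)).mul_left
    (x ^ (n + 1) / ((n : 𝕜) + 1) ^ (k + 1))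

theorem sum_antidiagonal_pow_div_mul_add_pow (d : ℕ) :
    ∑ p ∈ antidiagonal d,
        x ^ (p.1 + 1 + (p.2 + 1)) / (((p.1 : 𝕜) + 1) * ((p.1 : 𝕜) + 1 + ((p.2 : 𝕜) + 1)) ^ (k + 1))
      = x ^ (d + 2) / ((d : 𝕜) + 2) ^ (k + 1) * harmonic (d + 1) := by
  rw [harmonic_eq_sum_one_div, mul_sum, ← Nat.sum_antidiagonal_eq_sum_range_succ
    (fun i _ => x ^ (d + 2) / ((d : 𝕜) + 2) ^ (k + 1) * (1 / ((i : 𝕜) + 1)))]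
  refine sum_congr rfl fun p hp => ?_
  obtain rfl := mem_antidiagonal.1 hp
  rw [show p.1 + 1 + (p.2 + 1) = p.1 + p.2 + 2 by ring]
  push_cast
  field_simp
  ring

theorem hasSum_pow_div_pow_mul_harmonic (hk : 1 ≤ k) (hx : ‖x‖ ≤ 1) :
    HasSum (fun n : ℕ => x ^ (n + 1) / ((n : 𝕜) + 1) ^ (k + 1) * harmonic n)
      (∑' p : ℕ × ℕ, x ^ (p.1 + 1 + (p.2 + 1)) /
        (((p.1 : 𝕜) + 1) * ((p.1 : 𝕜) + 1 + ((p.2 : 𝕜) + 1)) ^ (k + 1))) := by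
  have hsum := (summable_pow_div_mul_add_pow hk hx (fun p => p.1 + 1 + (p.2 + 1))).hasSum
  have hdiag : HasSum (fun d : ℕ => ∑ p ∈ antidiagonal d, x ^ (p.1 + 1 + (p.2 + 1)) /
      (((p.1 : 𝕜) + 1) * ((p.1 : 𝕜) + 1 + ((p.2 : 𝕜) + 1)) ^ (k + 1))) _ :=
    (HasAntidiagonal.sigmaAntidiagonalEquivProd.hasSum_iff.2 hsum).sigma
      fun d => (antidiagonal d).hasSum _
  simp only [sum_antidiagonal_pow_div_mul_add_pow] at hdiag
  -- the `n = 0` term vanishes because `harmonic 0 = 0`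
  rw [← hasSum_nat_add_iff' 1]
  simpa [add_assoc, one_add_one_eq_two] using hdiag

end

theorem sum_formula_double_polylog (k : ℕ) (hk : 1 ≤ k) (x : ℂ) (hx : ‖x‖ ≤ 1) :
    (∑' p : ℕ × ℕ, x ^ (p.2 + 1) /
        (((p.1 : ℂ) + 1) * ((p.1 : ℂ) + 1 + ((p.2 : ℂ) + 1)) ^ (k + 1)))
      - (∑' p : ℕ × ℕ, x ^ (p.1 + 1 + (p.2 + 1)) /
        (((p.1 : ℂ) + 1) * ((p.1 : ℂ) + 1 + ((p.2 : ℂ) + 1)) ^ (k + 1)))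
      + ∑ ν ∈ Finset.Icc 2 (k + 1), ∑' p : ℕ × ℕ, x ^ (p.2 + 1) /
          (((p.2 : ℂ) + 1) ^ (k + 2 - ν) * ((p.1 : ℂ) + 1 + ((p.2 : ℂ) + 1)) ^ ν)
      = ∑' n : ℕ, x ^ (n + 1) / ((n : ℂ) + 1) ^ (k + 2) := by
  have hdiff (n : ℕ) : x ^ (n + 1) / ((n : ℂ) + 1) ^ (k + 2)
      = x ^ (n + 1) / ((n : ℂ) + 1) ^ (k + 1) * harmonic (n + 1)
        - x ^ (n + 1) / ((n : ℂ) + 1) ^ (k + 1) * harmonic n := by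
    rw [← mul_sub, harmonic_succ]
    push_cast
    field_simp
    ring
  have h := ((hasSum_pow_div_pow_mul_harmonic_succ hk hx).sub
    (hasSum_pow_div_pow_mul_harmonic hk hx)).congr_fun hdiff
  rw [h.tsum_eq]
  ring
end

section
/- For every positive integer k and every complex number x with |x| ≤ 1: ∑_{ν=2}^{k+1} ν ∑_{m,n≥1} x^n/(n^{k+2−ν}(m+n)^{ν+1}) + (k+1) ∑_{m,n≥1} x^n/(m(m+n)^{k+2}) + ∑_{m,n≥1} x^n/(m²(m+n)^{k+1}) − ∑_{m,n≥1} x^{m+n}/(m²(m+n)^{k+1}) = ∑_{n≥1} x^n/n^{k+3}. -/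
/-!
Write `m = p.1 + 1` and `n = p.2 + 1`. Partial fractions give, term by term,
`∑_ν ν / (n^(k+2-ν) (m+n)^(ν+1)) + (k+1) / (m (m+n)^(k+2)) + 1 / (m² (m+n)^(k+1))
  = (1/m² - 1/(m+n)²) / n^(k+1)`,
so for fixed `n` the sum over `m` of the first three series telescopes to `H n / n^(k+1)` with
`H n = ∑_{i ≤ n} 1/i²`. Grouping the subtracted series by `N = m + n` gives `H (N-1) / N^(k+1)`
instead, and `H n - H (n-1) = 1/n²`. For `k ≥ 1` and `‖x‖ ≤ 1` every double series is dominated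
by `∑ 1/(m² n^(k+1))`, which justifies the rearrangements.
-/

open Finset

theorem weighted_inv_pow_identity {K : Type*} [Field K] (k : ℕ) {m n : K}
    (hm : m ≠ 0) (hn : n ≠ 0) (hmn : m + n ≠ 0) :
    ∑ ν ∈ Icc 2 (k + 1), (ν : K) / (n ^ (k + 2 - ν) * (m + n) ^ (ν + 1))
      + (k + 1) / (m * (m + n) ^ (k + 2)) + 1 / (m ^ 2 * (m + n) ^ (k + 1))
      = (1 / m ^ 2 - 1 / (m + n) ^ 2) / n ^ (k + 1) := by
  induction k with
  | zero =>
    rw [Icc_eq_empty (by omega), sum_empty]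
    field_simp
    ring
  | succ k ih =>
    have hshift : ∑ ν ∈ Icc 2 (k + 1), (ν : K) / (n ^ (k + 1 + 2 - ν) * (m + n) ^ (ν + 1))
        = (∑ ν ∈ Icc 2 (k + 1), (ν : K) / (n ^ (k + 2 - ν) * (m + n) ^ (ν + 1))) / n := by
      rw [sum_div]
      refine sum_congr rfl fun ν hν => ?_
      rw [show k + 1 + 2 - ν = k + 2 - ν + 1 by grind, pow_succ]
      field_simp
    rw [sum_Icc_succ_top (by omega), hshift, eq_sub_of_add_eq (eq_sub_of_add_eq ih),
      show k + 1 + 2 - (k + 1 + 1) = 1 by omega]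
    push_cast
    field_simp
    ring

theorem sq_mul_pow_le_pow_mul_add_pow {m n k ν : ℕ} (h1 : 1 ≤ ν) (h2 : ν ≤ k + 2) :
    m ^ 2 * n ^ (k + 1) ≤ n ^ (k + 2 - ν) * (m + n) ^ (ν + 1) :=
  calc m ^ 2 * n ^ (k + 1) = n ^ (k + 2 - ν) * (m ^ 2 * n ^ (ν - 1)) := by
        rw [mul_left_comm, ← pow_add]; congr 2; omega
    _ ≤ n ^ (k + 2 - ν) * ((m + n) ^ 2 * (m + n) ^ (ν - 1)) := by gcongr <;> omega
    _ = n ^ (k + 2 - ν) * (m + n) ^ (ν + 1) := by rw [← pow_add]; congr 2; omega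

theorem sq_mul_pow_le_mul_add_pow {m n k : ℕ} :
    m ^ 2 * n ^ (k + 1) ≤ m * (m + n) ^ (k + 2) :=
  calc m ^ 2 * n ^ (k + 1) = m * (m * n ^ (k + 1)) := by ring
    _ ≤ m * ((m + n) * (m + n) ^ (k + 1)) := by gcongr <;> omega
    _ = m * (m + n) ^ (k + 2) := by ring

theorem sq_mul_pow_le_sq_mul_add_pow {m n k : ℕ} :
    m ^ 2 * n ^ (k + 1) ≤ m ^ 2 * (m + n) ^ (k + 1) := by
  gcongr
  omega

theorem summable_one_div_add_one_pow {j : ℕ} (hj : 1 < j) :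
    Summable fun n : ℕ => 1 / ((n : ℝ) + 1) ^ j := by
  exact_mod_cast (summable_nat_add_iff 1).mpr (Real.summable_one_div_nat_pow.mpr hj)

theorem summable_pow_div_natCast_of_le {x : ℂ} (hx : ‖x‖ ≤ 1) {k : ℕ} (hk : 1 ≤ k)
    (e D : ℕ × ℕ → ℕ) (hD : ∀ p, (p.1 + 1) ^ 2 * (p.2 + 1) ^ (k + 1) ≤ D p) :
    Summable fun p => x ^ e p / (D p : ℂ) := by
  have hbound := (summable_one_div_add_one_pow (j := 2) (by norm_num)).mul_of_nonneg
    (summable_one_div_add_one_pow (j := k + 1) (by omega)) (fun _ => by positivity)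
    (fun _ => by positivity)
  refine Summable.of_norm_bounded hbound fun p => ?_
  have hpos : (0 : ℝ) < ((p.1 + 1) ^ 2 * (p.2 + 1) ^ (k + 1) : ℕ) := by positivity
  calc ‖x ^ e p / (D p : ℂ)‖ = ‖x‖ ^ e p / D p := by
        rw [norm_div, norm_pow, Complex.norm_natCast]
    _ ≤ 1 / D p := by gcongr; exact pow_le_one₀ (norm_nonneg x) hx
    _ ≤ 1 / ((p.1 + 1) ^ 2 * (p.2 + 1) ^ (k + 1) : ℕ) :=
        one_div_le_one_div_of_le hpos (by exact_mod_cast hD p)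
    _ = 1 / ((p.1 : ℝ) + 1) ^ 2 * (1 / ((p.2 : ℝ) + 1) ^ (k + 1)) := by
        rw [one_div_mul_one_div]; push_cast; rfl

theorem HasSum.sub_nat_add {G : Type*} [AddCommGroup G] [TopologicalSpace G]
    [IsTopologicalAddGroup G] {b : ℕ → G} {B : G} (hb : HasSum b B) (j : ℕ) :
    HasSum (fun i => b i - b (i + j)) (∑ i ∈ range j, b i) := by
  simpa using hb.sub ((hasSum_nat_add_iff' j).mpr hb)

section Fiberwise

variable {R : Type*} [NormedRing R] {a b : ℕ → R} {s : R}

theorem hasSum_mul_sum_range_succ_of_hasSum_sub {B : R} (hb : HasSum b B)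
    (h : HasSum (fun p : ℕ × ℕ => a p.2 * (b p.1 - b (p.1 + p.2 + 1))) s) :
    HasSum (fun n => a n * ∑ i ∈ range (n + 1), b i) s :=
  ((Equiv.prodComm ℕ ℕ).hasSum_iff.mpr h).prod_fiberwise fun n =>
    (hb.sub_nat_add (n + 1)).mul_left (a n)

theorem hasSum_mul_sum_range_of_hasSum_lt
    (h : HasSum (fun p : ℕ × ℕ => a (p.1 + p.2 + 1) * b p.1) s) :
    HasSum (fun n => a n * ∑ i ∈ range n, b i) s := by
  set g : ℕ × ℕ → R := fun q => if q.2 < q.1 then a q.1 * b q.2 else 0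
  have hinj : Function.Injective fun p : ℕ × ℕ => (p.1 + p.2 + 1, p.1) := by
    intro p q hpq
    simp only [Prod.mk.injEq] at hpq
    ext <;> omega
  have hg : HasSum g s := by
    refine (hinj.hasSum_iff fun q hq => ?_).mp (by simpa [g, Function.comp_def] using h)
    simp only [g, ite_eq_right_iff]
    intro hlt
    exact absurd ⟨(q.2, q.1 - q.2 - 1), by ext <;> simp; omega⟩ hq
  refine hg.prod_fiberwise fun n => ?_
  have hsupp : ∀ i ∉ range n, g (n, i) = 0 := fun i hi => if_neg (by simpa using hi)
  rw [mul_sum, sum_congr rfl fun i hi => (if_pos (mem_range.mp hi)).symm]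
  exact hasSum_sum_of_ne_finset_zero hsupp

end Fiberwise

theorem hasSum_weighted_double_sums {x : ℂ} (hx : ‖x‖ ≤ 1) {k : ℕ} (hk : 1 ≤ k) :
    HasSum (fun p : ℕ × ℕ => x ^ (p.2 + 1) / ((p.2 : ℂ) + 1) ^ (k + 1) *
        (1 / ((p.1 : ℂ) + 1) ^ 2 - 1 / (((p.1 + p.2 + 1 : ℕ) : ℂ) + 1) ^ 2))
      ((∑ ν ∈ Icc 2 (k + 1), (ν : ℂ) * ∑' p : ℕ × ℕ, x ^ (p.2 + 1) /
        (((p.2 : ℂ) + 1) ^ (k + 2 - ν) * ((p.1 : ℂ) + 1 + ((p.2 : ℂ) + 1)) ^ (ν + 1)))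
      + ((k : ℂ) + 1) * (∑' p : ℕ × ℕ, x ^ (p.2 + 1) /
        (((p.1 : ℂ) + 1) * ((p.1 : ℂ) + 1 + ((p.2 : ℂ) + 1)) ^ (k + 2)))
      + (∑' p : ℕ × ℕ, x ^ (p.2 + 1) /
        (((p.1 : ℂ) + 1) ^ 2 * ((p.1 : ℂ) + 1 + ((p.2 : ℂ) + 1)) ^ (k + 1)))) := by
  have hA : ∀ ν ∈ Icc 2 (k + 1), Summable fun p : ℕ × ℕ => x ^ (p.2 + 1) /
      (((p.2 : ℂ) + 1) ^ (k + 2 - ν) * ((p.1 : ℂ) + 1 + ((p.2 : ℂ) + 1)) ^ (ν + 1)) := by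
    intro ν hν
    have := mem_Icc.mp hν
    exact_mod_cast summable_pow_div_natCast_of_le hx hk _
      (fun p => (p.2 + 1) ^ (k + 2 - ν) * (p.1 + 1 + (p.2 + 1)) ^ (ν + 1))
      fun _ => sq_mul_pow_le_pow_mul_add_pow (by omega) (by omega)
  have hB : Summable fun p : ℕ × ℕ => x ^ (p.2 + 1) /
      (((p.1 : ℂ) + 1) * ((p.1 : ℂ) + 1 + ((p.2 : ℂ) + 1)) ^ (k + 2)) := by
    exact_mod_cast summable_pow_div_natCast_of_le hx hk _
      (fun p => (p.1 + 1) * (p.1 + 1 + (p.2 + 1)) ^ (k + 2))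
      fun _ => sq_mul_pow_le_mul_add_pow
  have hC : Summable fun p : ℕ × ℕ => x ^ (p.2 + 1) /
      (((p.1 : ℂ) + 1) ^ 2 * ((p.1 : ℂ) + 1 + ((p.2 : ℂ) + 1)) ^ (k + 1)) := by
    exact_mod_cast summable_pow_div_natCast_of_le hx hk _
      (fun p => (p.1 + 1) ^ 2 * (p.1 + 1 + (p.2 + 1)) ^ (k + 1))
      fun _ => sq_mul_pow_le_sq_mul_add_pow
  refine (((hasSum_sum fun ν hν => (hA ν hν).hasSum.mul_left (ν : ℂ)).add
    (hB.hasSum.mul_left ((k : ℂ) + 1))).add hC.hasSum).congr_fun fun p => ?_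
  have hid := weighted_inv_pow_identity k (m := (p.1 : ℂ) + 1) (n := (p.2 : ℂ) + 1)
    (by norm_cast) (by norm_cast) (by norm_cast)
  simp_rw [mul_div_left_comm _ (x ^ (p.2 + 1)), ← mul_sum]
  push_cast
  linear_combination (-x ^ (p.2 + 1)) * hid

theorem hasSum_pow_add_div {x : ℂ} (hx : ‖x‖ ≤ 1) {k : ℕ} (hk : 1 ≤ k) :
    HasSum (fun p : ℕ × ℕ => x ^ (p.1 + p.2 + 1 + 1) /
        (((p.1 + p.2 + 1 : ℕ) : ℂ) + 1) ^ (k + 1) * (1 / ((p.1 : ℂ) + 1) ^ 2))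
      (∑' p : ℕ × ℕ, x ^ (p.1 + 1 + (p.2 + 1)) /
        (((p.1 : ℂ) + 1) ^ 2 * ((p.1 : ℂ) + 1 + ((p.2 : ℂ) + 1)) ^ (k + 1))) := by
  have hD : Summable fun p : ℕ × ℕ => x ^ (p.1 + 1 + (p.2 + 1)) /
      (((p.1 : ℂ) + 1) ^ 2 * ((p.1 : ℂ) + 1 + ((p.2 : ℂ) + 1)) ^ (k + 1)) := by
    exact_mod_cast summable_pow_div_natCast_of_le hx hk _
      (fun p => (p.1 + 1) ^ 2 * (p.1 + 1 + (p.2 + 1)) ^ (k + 1))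
      fun _ => sq_mul_pow_le_sq_mul_add_pow
  refine hD.hasSum.congr_fun fun p => ?_
  push_cast
  field_simp
  ring

theorem weighted_sum_formula_double_polylog (k : ℕ) (hk : 1 ≤ k) (x : ℂ)
    (hx : ‖x‖ ≤ 1) :
    (∑ ν ∈ Finset.Icc 2 (k + 1), (ν : ℂ) * ∑' p : ℕ × ℕ, x ^ (p.2 + 1) /
        (((p.2 : ℂ) + 1) ^ (k + 2 - ν) * ((p.1 : ℂ) + 1 + ((p.2 : ℂ) + 1)) ^ (ν + 1)))
      + ((k : ℂ) + 1) * (∑' p : ℕ × ℕ, x ^ (p.2 + 1) /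
        (((p.1 : ℂ) + 1) * ((p.1 : ℂ) + 1 + ((p.2 : ℂ) + 1)) ^ (k + 2)))
      + (∑' p : ℕ × ℕ, x ^ (p.2 + 1) /
        (((p.1 : ℂ) + 1) ^ 2 * ((p.1 : ℂ) + 1 + ((p.2 : ℂ) + 1)) ^ (k + 1)))
      - (∑' p : ℕ × ℕ, x ^ (p.1 + 1 + (p.2 + 1)) /
        (((p.1 : ℂ) + 1) ^ 2 * ((p.1 : ℂ) + 1 + ((p.2 : ℂ) + 1)) ^ (k + 1)))
      = ∑' n : ℕ, x ^ (n + 1) / ((n : ℂ) + 1) ^ (k + 3) := by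
  have hb : Summable fun i : ℕ => 1 / ((i : ℂ) + 1) ^ 2 := by
    simpa using
      Complex.summable_ofReal.mpr (summable_one_div_add_one_pow (j := 2) (by norm_num))
  have hE := hasSum_mul_sum_range_succ_of_hasSum_sub
    (a := fun n => x ^ (n + 1) / ((n : ℂ) + 1) ^ (k + 1)) hb.hasSum
    (hasSum_weighted_double_sums hx hk)
  have hD := hasSum_mul_sum_range_of_hasSum_lt
    (a := fun n => x ^ (n + 1) / ((n : ℂ) + 1) ^ (k + 1))
    (b := fun i => 1 / ((i : ℂ) + 1) ^ 2) (hasSum_pow_add_div hx hk)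
  refine (hE.sub hD).tsum_eq.symm.trans (tsum_congr fun n => ?_)
  rw [← mul_sub, sum_range_succ, add_sub_cancel_left]
  field_simp
  ring
end

section
/- For every positive integer k, ∑_{ν=2}^{k} ν · ζ₂(k+2−ν, ν+1) + 2(k+1) ζ₂(1, k+2) = ζ(k+3). -/
/-!
Write `T(a,b,c) = ∑_{x,y ≥ 1} x^{-a} y^{-b} (x+y)^{-c}` for Tornheim's double series, so that
`ζ₂(a,c) = T(a,0,c)` and `T` is symmetric in its first two arguments. Since `x + y` is the third
base, `T(a+1,b,c+1) = T(a+1,b+1,c) - T(a,b+1,c+1)`. With `b = 0` this writes the `ν`-th summand as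
`ν (g ν - g (ν+1))` for `g ν = T(k+2-ν,1,ν)`, and gives `2 ζ₂(1,k+2) = g (k+1)` by symmetry, so
Abel summation turns the left side into `g 2 + ∑_{ν=2}^{k+1} g ν`. With `b = 1` the last sum
telescopes to `T(k,2,1) - T(0,2,k+1)`; two more partial fractions and the stuffle relation
`ζ(k+1) ζ(2) = ζ₂(k+1,2) + ζ₂(2,k+1) + ζ(k+3)` then leave `ζ(k+3)`.
-/

open scoped BigOperators

open Finset Function

theorem Finset.sum_Icc_natCast_mul_sub_succ {R : Type*} [CommRing R] (g : ℕ → R) {m n : ℕ}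
    (hmn : m ≤ n + 1) :
    ∑ ν ∈ Icc m n, (ν : R) * (g ν - g (ν + 1)) + (n + 1) * g (n + 1) =
      m * g m + ∑ ν ∈ Icc m n, g (ν + 1) := by
  have hparts (ν : ℕ) : (ν : R) * (g ν - g (ν + 1)) =
      g (ν + 1) - (((ν + 1 : ℕ) : R) * g (ν + 1) - ν * g ν) := by
    push_cast; ring
  rw [← Ico_add_one_right_eq_Icc]
  simp only [hparts, sum_sub_distrib, sum_Ico_sub (fun ν => (ν : R) * g ν) hmn]
  push_cast
  ring

theorem tsum_nat_prod_eq_tsum_lt_add_tsum_diag_add_tsum_gt {α : Type*} [NormedAddCommGroup α]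
    [CompleteSpace α] {f : ℕ × ℕ → α} (hf : Summable f) :
    ∑' p, f p = ∑' p : ℕ × ℕ, f (p.1, p.1 + p.2 + 1) + ∑' n, f (n, n) +
      ∑' p : ℕ × ℕ, f (p.1 + p.2 + 1, p.2) := by
  let e : (ℕ × ℕ) ⊕ ℕ ⊕ (ℕ × ℕ) → ℕ × ℕ :=
    Sum.elim (fun p => (p.1, p.1 + p.2 + 1))
      (Sum.elim (fun n => (n, n)) fun p => (p.1 + p.2 + 1, p.2))
  have he : Bijective e := by
    constructor
    · rintro (p | n | p) (q | m | q) h <;> simp [e, Prod.ext_iff] at h ⊢ <;> omega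
    · rintro ⟨m, n⟩
      rcases lt_trichotomy m n with h | rfl | h
      · exact ⟨.inl (m, n - m - 1), by simp [e]; omega⟩
      · exact ⟨.inr (.inl m), rfl⟩
      · exact ⟨.inr (.inr (m - n - 1, n)), by simp [e]; omega⟩
  have hfe : Summable (f ∘ e) := hf.comp_injective he.injective
  have hfe₂ : Summable (f ∘ e ∘ Sum.inr) := hfe.comp_injective Sum.inr_injective
  rw [← he.injective.tsum_eq (by simp [he.surjective.range_eq]), add_assoc]
  exact ((hfe.comp_injective Sum.inl_injective).tsum_sum hfe₂).trans <| congrArg _ <|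
    (hfe₂.comp_injective Sum.inl_injective).tsum_sum (hfe₂.comp_injective Sum.inr_injective)

noncomputable def tornheimTerm (a b c : ℕ) (p : ℕ × ℕ) : ℝ :=
  1 / (((p.1 : ℝ) + 1) ^ a * ((p.2 : ℝ) + 1) ^ b * ((p.1 + 1 : ℝ) + (p.2 + 1)) ^ c)

noncomputable def tornheimSum (a b c : ℕ) : ℝ := ∑' p, tornheimTerm a b c p

theorem summable_one_div_nat_add_one_pow_s8 {s : ℕ} (hs : 2 ≤ s) :
    Summable (fun n : ℕ => 1 / ((n : ℝ) + 1) ^ s) := by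
  simpa using (summable_nat_add_iff 1).2 <| Real.summable_one_div_nat_pow.2 hs

theorem summable_tornheimTerm {a b c : ℕ} (i j : ℕ) (ha : 2 ≤ a + i) (hb : 2 ≤ b + j)
    (hc : i + j ≤ c) : Summable (tornheimTerm a b c) := by
  have hle (x y : ℝ) (hx : 1 ≤ x) (hy : 1 ≤ y) :
      1 / (x ^ a * y ^ b * (x + y) ^ c) ≤ 1 / x ^ (a + i) * (1 / y ^ (b + j)) := by
    rw [div_mul_div_comm, one_mul]
    apply one_div_le_one_div_of_le (by positivity)
    calc x ^ (a + i) * y ^ (b + j) = x ^ a * y ^ b * (x ^ i * y ^ j) := by ring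
      _ ≤ x ^ a * y ^ b * ((x + y) ^ i * (x + y) ^ j) := by gcongr <;> linarith
      _ ≤ x ^ a * y ^ b * (x + y) ^ c := by
        rw [← pow_add]; gcongr; linarith
  refine .of_nonneg_of_le (fun p => by unfold tornheimTerm; positivity)
    (fun p => hle _ _ (by simp) (by simp))
    ((summable_one_div_nat_add_one_pow_s8 ha).mul_of_nonneg (summable_one_div_nat_add_one_pow_s8 hb)
      (fun _ => by positivity) (fun _ => by positivity))

theorem tornheimSum_comm (a b c : ℕ) : tornheimSum a b c = tornheimSum b a c := by
  rw [tornheimSum, ← (Equiv.prodComm ℕ ℕ).tsum_eq]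
  refine tsum_congr fun p => ?_
  simp only [tornheimTerm, Equiv.prodComm_apply, Prod.fst_swap, Prod.snd_swap]
  ring

theorem tornheimSum_partial_fraction {a b c : ℕ}
    (h₁ : Summable (tornheimTerm (a + 1) (b + 1) c))
    (h₂ : Summable (tornheimTerm a (b + 1) (c + 1))) :
    tornheimSum (a + 1) b (c + 1) =
      tornheimSum (a + 1) (b + 1) c - tornheimSum a (b + 1) (c + 1) := by
  rw [tornheimSum, tornheimSum, tornheimSum, ← h₁.tsum_sub h₂]
  refine tsum_congr fun p => ?_
  simp only [tornheimTerm]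
  field_simp
  ring

theorem tornheimSum_stuffle {a b : ℕ} (ha : 2 ≤ a) (hb : 2 ≤ b) :
    tornheimSum a b 0 =
      tornheimSum a 0 b + tornheimSum 0 b a + ∑' n : ℕ, 1 / ((n : ℝ) + 1) ^ (a + b) := by
  rw [tornheimSum, tsum_nat_prod_eq_tsum_lt_add_tsum_diag_add_tsum_gt
    (summable_tornheimTerm (c := 0) 0 0 ha hb le_rfl), add_right_comm]
  congr 1; congr 1
  all_goals refine tsum_congr fun p => ?_
  all_goals simp only [tornheimTerm]; push_cast; ring

theorem tornheimSum_one_two_add_two_one_sub_zero_two {a : ℕ} (ha : 1 ≤ a) :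
    tornheimSum a 1 2 + tornheimSum a 2 1 - tornheimSum 0 2 (a + 1) =
      ∑' n : ℕ, 1 / ((n : ℝ) + 1) ^ (a + 3) := by
  have h₁ := tornheimSum_partial_fraction (a := a) (b := 0) (c := 1)
    (summable_tornheimTerm 0 1 (by omega) le_rfl le_rfl)
    (summable_tornheimTerm 1 1 (by omega) le_rfl le_rfl)
  have h₂ := tornheimSum_partial_fraction (a := a) (b := 1) (c := 0)
    (summable_tornheimTerm 0 0 (by omega) le_rfl le_rfl)
    (summable_tornheimTerm 1 0 (by omega) le_rfl le_rfl)
  have h₃ := tornheimSum_stuffle (a := a + 1) (b := 2) (by omega) le_rfl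
  linarith

theorem weighted_sum_tornheimSum (k : ℕ) (hk : 1 ≤ k) :
    ∑ ν ∈ Icc 2 k, (ν : ℝ) * tornheimSum (k + 2 - ν) 0 (ν + 1) +
        2 * ((k : ℝ) + 1) * tornheimSum 1 0 (k + 2) =
      ∑' n : ℕ, 1 / ((n : ℝ) + 1) ^ (k + 3) := by
  set g : ℕ → ℝ := fun ν => tornheimSum (k + 2 - ν) 1 ν with hg
  set h : ℕ → ℝ := fun ν => tornheimSum (k + 1 - ν) 2 ν with hh
  have hg_sub : ∀ ν ∈ Icc 2 k, tornheimSum (k + 2 - ν) 0 (ν + 1) = g ν - g (ν + 1) := by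
    intro ν hν
    obtain ⟨a, rfl⟩ : ∃ a, k = a + ν := ⟨k - ν, by grind⟩
    have hν : 2 ≤ ν := (mem_Icc.mp hν).1
    simp only [hg, show a + ν + 2 - ν = a + 1 + 1 by omega,
      show a + ν + 2 - (ν + 1) = a + 1 by omega]
    exact tornheimSum_partial_fraction (summable_tornheimTerm 1 1 (by omega) le_rfl hν)
      (summable_tornheimTerm 2 1 (by omega) le_rfl (by omega))
  have hh_sub : ∀ ν ∈ Icc 1 k, g (ν + 1) = h ν - h (ν + 1) := by
    intro ν hν
    obtain ⟨a, rfl⟩ : ∃ a, k = a + ν := ⟨k - ν, by grind⟩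
    have hν : 1 ≤ ν := (mem_Icc.mp hν).1
    simp only [hg, hh, show a + ν + 2 - (ν + 1) = a + 1 by omega,
      show a + ν + 1 - ν = a + 1 by omega, show a + ν + 1 - (ν + 1) = a by omega]
    exact tornheimSum_partial_fraction (summable_tornheimTerm 1 0 (by omega) le_rfl hν)
      (summable_tornheimTerm 2 0 (by omega) le_rfl (by omega))
  have hg_top : 2 * tornheimSum 1 0 (k + 2) = g (k + 1) := by
    have hsplit := tornheimSum_partial_fraction (a := 0) (b := 0) (c := k + 1)
      (summable_tornheimTerm 1 1 le_rfl le_rfl (by omega))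
      (summable_tornheimTerm 2 1 le_rfl le_rfl (by omega))
    rw [tornheimSum_comm 0] at hsplit
    simp only [hg, show k + 2 - (k + 1) = 1 by omega]
    linarith
  calc _ = ∑ ν ∈ Icc 2 k, (ν : ℝ) * (g ν - g (ν + 1)) + (k + 1) * g (k + 1) := by
        rw [sum_congr rfl fun ν hν => by rw [hg_sub ν hν], ← hg_top]
        ring
    _ = g 2 + ∑ ν ∈ Icc 1 k, g (ν + 1) := by
        rw [sum_Icc_natCast_mul_sub_succ g (by omega), ← add_sum_Ioc_eq_sum_Icc hk,
          ← Icc_add_one_left_eq_Ioc]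
        push_cast
        ring
    _ = g 2 + (h 1 - h (k + 1)) := by
        rw [sum_congr rfl hh_sub, ← neg_sub (h (k + 1)), ← sum_Icc_sub hk, ← sum_neg_distrib]
        simp only [neg_sub]
    _ = tornheimSum k 1 2 + tornheimSum k 2 1 - tornheimSum 0 2 (k + 1) := by
        simp only [hg, hh, show k + 2 - 2 = k by omega, show k + 1 - 1 = k by omega,
          Nat.sub_self]
        ring
    _ = _ := tornheimSum_one_two_add_two_one_sub_zero_two hk

theorem zeta2_eq_tornheimSum (a b : ℕ) : zeta2 a b = tornheimSum a 0 b := by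
  rw [zeta2, tornheimSum, Complex.ofReal_tsum]
  refine tsum_congr fun p => ?_
  simp only [tornheimTerm]
  push_cast
  ring

theorem riemannZeta_natCast_eq_tsum {s : ℕ} (hs : 1 < s) :
    riemannZeta s = ∑' n : ℕ, 1 / ((n : ℂ) + 1) ^ s := by
  simpa only [Complex.cpow_natCast] using
    zeta_eq_tsum_one_div_nat_add_one_cpow (s := s) (by simpa using hs)

theorem weighted_sum_formula_SF_nu (k : ℕ) (hk : 1 ≤ k) :
    (∑ ν ∈ Finset.Icc 2 k, (ν : ℂ) * zeta2 (k + 2 - ν) (ν + 1))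
      + 2 * ((k : ℂ) + 1) * zeta2 1 (k + 2) = riemannZeta (k + 3) := by
  have h := congrArg ((↑) : ℝ → ℂ) (weighted_sum_tornheimSum k hk)
  push_cast [Complex.ofReal_tsum] at h
  have hζ : riemannZeta (k + 3) = ∑' n : ℕ, 1 / ((n : ℂ) + 1) ^ (k + 3) := by
    exact_mod_cast riemannZeta_natCast_eq_tsum (s := k + 3) (by omega)
  simp only [zeta2_eq_tornheimSum, hζ, h]
end

section
/- Let N be an odd positive integer and ξ a primitive N-th root of unity. Then for every integer n: ∑_{a=0}^{N−1} ((2a−N)/N) ξ^{−an} = −1 if N divides n, and equals 2/(ξ^{−n} − 1) if N does not divide n. -/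
/-!
With ω = ξ⁻ⁿ, an N-th root of unity, the sum is (2/N) ∑ a ωᵃ - ∑ ωᵃ. If ω ≠ 1 the geometric
sum vanishes and summation by parts gives (ω - 1) ∑ a ωᵃ = N; if ω = 1 it is Gauss's sum N(N - 1)/2.
-/

open Finset

theorem mul_sum_range_natCast_mul_pow {R : Type*} [CommRing R] (x : R) (n : ℕ) :
    (x - 1) * ∑ i ∈ range n, (i : R) * x ^ i = (n - 1) * x ^ n - ∑ i ∈ range n, x ^ i + 1 := by
  induction n with
  | zero => simp
  | succ n ih =>
    rw [sum_range_succ, sum_range_succ, mul_add, ih]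
    push_cast
    ring

theorem two_mul_sum_range_natCast {R : Type*} [CommRing R] (n : ℕ) :
    2 * ∑ i ∈ range n, (i : R) = n * (n - 1) := by
  induction n with
  | zero => simp
  | succ n ih =>
    rw [sum_range_succ, mul_add, ih]
    push_cast
    ring

theorem geom_sum_eq_zero_of_pow_eq_one {K : Type*} [DivisionRing K] {x : K} {n : ℕ}
    (hxn : x ^ n = 1) (hx1 : x ≠ 1) : ∑ i ∈ range n, x ^ i = 0 := by
  rw [geom_sum_eq hx1, hxn, sub_self, zero_div]

theorem sum_range_natCast_mul_pow_of_pow_eq_one {K : Type*} [Field K] {x : K} {n : ℕ}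
    (hxn : x ^ n = 1) (hx1 : x ≠ 1) : ∑ i ∈ range n, (i : K) * x ^ i = n / (x - 1) := by
  have h := mul_sum_range_natCast_mul_pow x n
  rw [hxn, geom_sum_eq_zero_of_pow_eq_one hxn hx1] at h
  rw [eq_div_iff (sub_ne_zero.mpr hx1), mul_comm, h]
  ring

theorem sum_range_centered_mul_pow_of_pow_eq_one {K : Type*} [Field K] [DecidableEq K] {x : K}
    {n : ℕ} (hn : (n : K) ≠ 0) (hxn : x ^ n = 1) :
    ∑ i ∈ range n, (2 * (i : K) - n) / n * x ^ i = if x = 1 then -1 else 2 / (x - 1) := by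
  simp_rw [div_mul_eq_mul_div, ← sum_div, sub_mul, sum_sub_distrib, ← mul_sum, mul_assoc, ← mul_sum]
  split_ifs with hx1
  · simp only [hx1, one_pow, mul_one, sum_const, card_range, nsmul_eq_mul,
      two_mul_sum_range_natCast]
    field_simp
    ring
  · rw [sum_range_natCast_mul_pow_of_pow_eq_one hxn hx1, geom_sum_eq_zero_of_pow_eq_one hxn hx1,
      mul_zero, sub_zero]
    field_simp

theorem root_of_unity_weighted_sum_general (N : ℕ) (hN : 0 < N)
    (ξ : ℂ) (hξ : IsPrimitiveRoot ξ N) (n : ℤ) :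
    ∑ a ∈ Finset.range N, ((2 * (a : ℂ) - N) / N) * ξ ^ (-(a : ℤ) * n)
      = if (N : ℤ) ∣ n then -1 else 2 / (ξ ^ (-n) - 1) := by
  have hpow (a : ℕ) : ξ ^ (-(a : ℤ) * n) = (ξ ^ (-n)) ^ a := by
    rw [neg_mul, ← mul_neg, mul_comm, zpow_mul, zpow_natCast]
  have hroot : (ξ ^ (-n)) ^ N = 1 := by
    rw [← zpow_natCast, ← zpow_mul, mul_comm, zpow_mul, zpow_natCast, hξ.pow_eq_one, one_zpow]
  have hone : ξ ^ (-n) = 1 ↔ (N : ℤ) ∣ n := by rw [hξ.zpow_eq_one_iff_dvd, dvd_neg]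
  simp_rw [hpow, sum_range_centered_mul_pow_of_pow_eq_one (by exact_mod_cast hN.ne') hroot, hone]

theorem root_of_unity_weighted_sum (N : ℕ) (hN : 0 < N) (hNodd : Odd N)
    (ξ : ℂ) (hξ : IsPrimitiveRoot ξ N) (n : ℤ) :
    ∑ a ∈ Finset.range N, ((2 * (a : ℂ) - N) / N) * ξ ^ (-(a : ℤ) * n)
      = if (N : ℤ) ∣ n then -1 else 2 / (ξ ^ (-n) - 1) :=
  root_of_unity_weighted_sum_general N hN ξ hξ n
end
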